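/- arXiv:1809.00087 — 2 statements merged into one kernel-verified Lean document; each statement's English description precedes it below -/
import Mathlib

section
/- Let F be a field, A an associative unital ring, η ∈ A, and br : Fˣ → A satisfying the four Milnor–Witt relations (Steinberg relation for x ≠ 0,1; η·br(x)·br(y) = br(xy) − br(x) − br(y); η central; η·(η·br(−1)+2) = 0). Then br(x)·br(−x) = 0 for every x ∈ Fˣ. -/
private lemma mw_aux {A : Type*} [Ring A] (η p q r : A) (hc : p * η = η * p)
    (h : p * q = 0) : p * (η * q * r) = 0 := by
  calc p * (η * q * r) = (p * η) * q * r := by noncomm_ring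
    _ = (η * p) * q * r := by rw [hc]
    _ = η * (p * q) * r := by noncomm_ring
    _ = 0 := by rw [h]; simp

theorem mw_br_neg_self {F : Type*} [Field F] {A : Type*} [Ring A]
    (η : A) (br : Fˣ → A)
    (h_steinberg : ∀ x y : Fˣ, (x : F) + (y : F) = 1 → br x * br y = 0)
    (h_mul : ∀ x y : Fˣ, η * br x * br y = br (x * y) - br x - br y)
    (h_comm : ∀ x : Fˣ, br x * η = η * br x)
    (h_eta : η * (η * br (-1) + 2) = 0) :
    ∀ x : Fˣ, br x * br (-x) = 0 := by
  -- Step 1: br 1 = 0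
  have e1 : η * br (-1) * br 1 = - br 1 := by
    have h := h_mul (-1) 1
    rw [mul_one] at h
    rw [h]; noncomm_ring
  have h2 : η * (η * br (-1)) = -(2 * η) := by
    have h0 : η * (η * br (-1)) + 2 * η = 0 := by
      calc η * (η * br (-1)) + 2 * η
          = η * (η * br (-1) + 2) := by noncomm_ring
        _ = 0 := h_eta
    exact eq_neg_of_add_eq_zero_left h0
  have hc1 : η * br 1 = 0 := by
    have e2 : η * (η * br (-1) * br 1) = η * (- br 1) := by rw [e1]
    have e3 : -(2 * (η * br 1)) = -(η * br 1) := by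
      calc -(2 * (η * br 1)) = (η * (η * br (-1))) * br 1 := by rw [h2]; noncomm_ring
        _ = η * (η * br (-1) * br 1) := by noncomm_ring
        _ = η * (- br 1) := e2
        _ = -(η * br 1) := by noncomm_ring
    have h5 : 2 * (η * br 1) = η * br 1 := neg_injective e3
    have h6 : η * br 1 = 2 * (η * br 1) - (η * br 1) := by noncomm_ring
    rw [h6, h5, sub_self]
  have hb1 : br 1 = 0 := by
    have h := h_mul 1 1
    rw [mul_one] at h
    have : η * br 1 * br 1 = - br 1 := by rw [h]; noncomm_ring
    rw [hc1, zero_mul] at this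
    exact (neg_eq_zero.mp this.symm)
  intro x
  by_cases hx : x = 1
  · subst hx; rw [hb1, zero_mul]
  -- Step 2: x ≠ 1
  have hxF : (x : F) ≠ 1 := fun h => hx (Units.ext (by simpa using h))
  have ha : (1 : F) - (x : F) ≠ 0 := sub_ne_zero.mpr (Ne.symm hxF)
  have hxinvF : ((x : F))⁻¹ ≠ 1 := by
    intro h
    exact hxF (by rw [← inv_inv (x : F), h, inv_one])
  have hbne : (1 : F) - ((x : F))⁻¹ ≠ 0 := sub_ne_zero.mpr (Ne.symm hxinvF)
  set a : Fˣ := Units.mk0 (1 - (x : F)) ha with ha_def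
  set b : Fˣ := Units.mk0 (1 - ((x : F))⁻¹) hbne with hb_def
  -- Steinberg relations
  have hS1 : br x * br a = 0 := by
    apply h_steinberg
    show (x : F) + (1 - (x : F)) = 1
    ring
  have hS2 : br x⁻¹ * br b = 0 := by
    apply h_steinberg
    show ((x⁻¹ : Fˣ) : F) + (1 - ((x : F))⁻¹) = 1
    rw [Units.val_inv_eq_inv_val]
    ring
  -- br x * br b = 0
  have hinv : br x = - br x⁻¹ - η * br x * br x⁻¹ := by
    have h := h_mul x x⁻¹
    rw [mul_inv_cancel, hb1] at h
    rw [h]; abel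
  have hxb : br x * br b = 0 := by
    calc br x * br b = (- br x⁻¹ - η * br x * br x⁻¹) * br b := by rw [← hinv]
      _ = -(br x⁻¹ * br b) - η * br x * (br x⁻¹ * br b) := by noncomm_ring
      _ = 0 := by rw [hS2]; noncomm_ring
  -- br x * br b⁻¹ = 0
  have hbw : br b⁻¹ = - br b - η * br b * br b⁻¹ := by
    have h := h_mul b b⁻¹
    rw [mul_inv_cancel, hb1] at h
    rw [h]; abel
  have hxw : br x * br b⁻¹ = 0 := by
    have h3 : br x * (η * br b * br b⁻¹) = 0 := mw_aux η (br x) (br b) (br b⁻¹) (h_comm x) hxb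
    calc br x * br b⁻¹ = br x * (- br b - η * br b * br b⁻¹) := by rw [← hbw]
      _ = -(br x * br b) - br x * (η * br b * br b⁻¹) := by noncomm_ring
      _ = 0 := by rw [hxb, h3]; noncomm_ring
  -- -x = a * b⁻¹
  have hmx : -x = a * b⁻¹ := by
    apply Units.ext
    rw [Units.val_mul, Units.val_inv_eq_inv_val]
    show (↑(-x) : F) = (1 - (x : F)) * (1 - ((x : F))⁻¹)⁻¹
    rw [Units.val_neg]
    have hx0 : (x : F) ≠ 0 := Units.ne_zero x
    have key : (-(x : F)) * (1 - ((x : F))⁻¹) = 1 - (x : F) := by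
      field_simp
      ring
    rw [← key, mul_assoc, mul_inv_cancel₀ hbne, mul_one]
  -- conclude
  have hsum : br (-x) = br a + br b⁻¹ + η * br a * br b⁻¹ := by
    have h := h_mul a b⁻¹
    rw [← hmx] at h
    rw [h]; abel
  have h4 : br x * (η * br a * br b⁻¹) = 0 := mw_aux η (br x) (br a) (br b⁻¹) (h_comm x) hS1
  calc br x * br (-x) = br x * (br a + br b⁻¹ + η * br a * br b⁻¹) := by rw [hsum]
    _ = br x * br a + br x * br b⁻¹ + br x * (η * br a * br b⁻¹) := by noncomm_ring
    _ = 0 := by rw [hS1, hxw, h4]; simp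
end

section
/- Let F be a field, A an associative unital ring, η ∈ A, and br : Fˣ → A satisfying the four Milnor–Witt relations (Steinberg relation for x ≠ 0,1; η·br(x)·br(y) = br(xy) − br(x) − br(y); η central; η·(η·br(−1)+2) = 0). Then the symbols are ε-commutative: br(x)·br(y) = −(1 + η·br(−1))·br(y)·br(x) for all x, y ∈ Fˣ. -/
theorem mw_eps_commutativity {F : Type*} [Field F] {A : Type*} [Ring A]
    (η : A) (br : Fˣ → A)
    (h_steinberg : ∀ x y : Fˣ, (x : F) + (y : F) = 1 → br x * br y = 0)
    (h_mul : ∀ x y : Fˣ, η * br x * br y = br (x * y) - br x - br y)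
    (h_comm : ∀ x : Fˣ, br x * η = η * br x)
    (h_eta : η * (η * br (-1) + 2) = 0) :
    ∀ x y : Fˣ, br x * br y = -(1 + η * br (-1)) * br y * br x := by
  -- Step 1: br 1 = 0
  have e1 : η * br 1 * br 1 = -br 1 := by
    have h := h_mul 1 1; rw [mul_one] at h
    linear_combination (norm := noncomm_ring) h
  have e2m : η * br (-1) * br 1 = -br 1 := by
    have h := h_mul (-1) 1; rw [mul_one] at h
    linear_combination (norm := noncomm_ring) h
  have e3 : η * (η * br (-1)) = -(2 * η) := by
    linear_combination (norm := noncomm_ring) h_eta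
  have c1 : η * (η * br (-1) * br 1) = η * (-br 1) := by rw [e2m]
  have e4 : η * br 1 = 0 := by
    linear_combination (norm := noncomm_ring) e3 * br 1 - c1
  have h1 : br (1 : Fˣ) = 0 := by
    linear_combination (norm := noncomm_ring) e1 - e4 * br 1
  -- Step 2: cancellation lemma
  have hX : ∀ u t : Fˣ, br u⁻¹ * br t = 0 → br u * br t = 0 := by
    intro u t h0
    have hminv : η * br u⁻¹ * br u = -br u⁻¹ - br u := by
      have hm := h_mul u⁻¹ u
      rw [inv_mul_cancel, h1] at hm
      linear_combination (norm := noncomm_ring) hm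
    have hminv2 : η * br u * br u⁻¹ = -br u - br u⁻¹ := by
      have hm := h_mul u u⁻¹
      rw [mul_inv_cancel, h1] at hm
      linear_combination (norm := noncomm_ring) hm
    have e : br u * br t = -(η * (br u⁻¹ * (br u * br t))) := by
      linear_combination (norm := noncomm_ring) hminv * br t - h0
    have z1 : (1 + η * br u⁻¹) * (br u * br t) = 0 := by
      linear_combination (norm := noncomm_ring) e
    have mult1 : (1 + η * br u) * (1 + η * br u⁻¹) = 1 := by
      linear_combination (norm := noncomm_ring) η * hminv2 + η * (h_comm u) * br u⁻¹
    calc br u * br t = ((1 + η * br u) * (1 + η * br u⁻¹)) * (br u * br t) := by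
          rw [mult1, one_mul]
      _ = (1 + η * br u) * ((1 + η * br u⁻¹) * (br u * br t)) := by rw [mul_assoc]
      _ = 0 := by rw [z1, mul_zero]
  -- Step 3: br u * br (-u) = 0
  have hA : ∀ u : Fˣ, br u * br (-u) = 0 := by
    intro u
    by_cases hu1 : u = 1
    · rw [hu1, h1, zero_mul]
    · have hu1' : (u : F) ≠ 1 := fun h => hu1 (Units.val_eq_one.mp h)
      have hu0 : (u : F) ≠ 0 := Units.ne_zero u
      have hv0 : (1 : F) - (u : F) ≠ 0 := sub_ne_zero.mpr (Ne.symm hu1')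
      have hiu1 : ((u : F))⁻¹ ≠ 1 := fun h => hu1' (inv_eq_one.mp h)
      have hw0 : (1 : F) - ((u : F))⁻¹ ≠ 0 := sub_ne_zero.mpr (Ne.symm hiu1)
      set v : Fˣ := Units.mk0 (1 - (u : F)) hv0 with hv_def
      set w : Fˣ := Units.mk0 (1 - ((u : F))⁻¹) hw0 with hw_def
      have st1 : br u * br v = 0 := by
        apply h_steinberg
        rw [hv_def, Units.val_mk0]; ring
      have st2 : br u⁻¹ * br w = 0 := by
        apply h_steinberg
        rw [hw_def, Units.val_mk0, Units.val_inv_eq_inv_val]; ring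
      have s3 : br u * br w = 0 := hX u w st2
      have hmw : η * br w * br w⁻¹ = -br w - br w⁻¹ := by
        have hm := h_mul w w⁻¹
        rw [mul_inv_cancel, h1] at hm
        linear_combination (norm := noncomm_ring) hm
      have s4 : br u * br w⁻¹ = 0 := by
        linear_combination (norm := noncomm_ring)
          br u * hmw - (h_comm u) * (br w * br w⁻¹) - η * s3 * br w⁻¹ - s3
      have hvw : v * w⁻¹ = -u := by
        apply Units.ext
        rw [Units.val_mul, Units.val_inv_eq_inv_val, Units.val_neg, hv_def, hw_def,
          Units.val_mk0, Units.val_mk0]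
        have key : (1 : F) - (u : F) = -(u : F) * (1 - ((u : F))⁻¹) := by
          field_simp
          ring
        rw [key, mul_inv_cancel_right₀ hw0]
      have hm2 : η * br v * br w⁻¹ = br (-u) - br v - br w⁻¹ := by
        have h' := h_mul v w⁻¹; rwa [hvw] at h'
      linear_combination (norm := noncomm_ring)
        -(br u * hm2) + (h_comm u) * (br v * br w⁻¹) + η * st1 * br w⁻¹ + st1 + s4
  -- Step 4: absorption lemmas
  have LA : ∀ u z : Fˣ, br u * br (-(u * z)) = br u * br z := by
    intro u z
    have hm : η * br (-u) * br z = br (-(u * z)) - br (-u) - br z := by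
      have h' := h_mul (-u) z; rwa [neg_mul] at h'
    have ha := hA u
    linear_combination (norm := noncomm_ring)
      -(br u * hm) + (h_comm u) * (br (-u) * br z) + η * ha * br z + ha
  have RA : ∀ u z : Fˣ, br (-(u * z)) * br u = br z * br u := by
    intro u z
    have hm : η * br (-u) * br z = br (-(u * z)) - br (-u) - br z := by
      have h' := h_mul (-u) z; rwa [neg_mul] at h'
    have ha : br (-u) * br u = 0 := by have := hA (-u); rwa [neg_neg] at this
    have hm2 : η * br z * br u = br (u * z) - br z - br u := by
      have h' := h_mul z u; rwa [mul_comm z u] at h'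
    have la : br (-u) * br (u * z) = br (-u) * br z := by
      have := LA (-u) z; rwa [neg_mul, neg_neg] at this
    linear_combination (norm := noncomm_ring)
      -(hm * br u) - (h_comm (-u)) * (br z * br u) + br (-u) * hm2 + la
  -- Now the main computation
  intro x y
  have epp : br x * br x = br x * br (-1) := by
    have := LA x (-1); rwa [mul_neg_one, neg_neg] at this
  have epp' : br x * br x = br (-1) * br x := by
    have := RA x (-1); rwa [mul_neg_one, neg_neg] at this
  have epm : br x * br (-1) = br (-1) * br x := by rw [← epp]; exact epp'
  have eqq : br y * br y = br y * br (-1) := by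
    have := LA y (-1); rwa [mul_neg_one, neg_neg] at this
  have eqq' : br y * br y = br (-1) * br y := by
    have := RA y (-1); rwa [mul_neg_one, neg_neg] at this
  have eqm : br y * br (-1) = br (-1) * br y := by rw [← eqq]; exact eqq'
  have e5 : br (x * y) * br (x * y) = br (x * y) * br (-1) := by
    have := LA (x * y) (-1); rwa [mul_neg_one, neg_neg] at this
  have hmb : η * br x * br y = br (x * y) - br x - br y := h_mul x y
  have hmb' : br (x * y) = br x + br y + η * (br x * br y) := by
    linear_combination (norm := noncomm_ring) -hmb
  -- R7 : br (-(x*x)) * br y = br (-x) * br y + br x * br y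
  have R7 : br (-(x * x)) * br y = br (-x) * br y + br x * br y := by
    have hma : η * br (-x) * br x = br (-(x * x)) - br (-x) - br x := by
      have h' := h_mul (-x) x; rwa [neg_mul] at h'
    have la1 : br (-x) * br (x * y) = br (-x) * br y := by
      have := LA (-x) y; rwa [neg_mul, neg_neg] at this
    have ha2 : br (-x) * br x = 0 := by have := hA (-x); rwa [neg_neg] at this
    linear_combination (norm := noncomm_ring)
      -(hma * br y) - (h_comm (-x)) * (br x * br y) + br (-x) * hmb + la1 - ha2
  -- R10 : br (x*y) * br (x*y) = br (-y) * br x + br (-x) * br y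
  have R10 : br (x * y) * br (x * y) = br (-y) * br x + br (-x) * br y := by
    have ra1 : br (x * y) * br x = br (-y) * br x := by
      have := RA x (-y); rwa [mul_neg, neg_neg] at this
    have ra2 : br (x * y) * br y = br (-x) * br y := by
      have := RA y (-x); rwa [mul_neg, neg_neg, mul_comm y x] at this
    have hmc : η * br (x * y) * br x = br (x * y * x) - br (x * y) - br x := h_mul (x * y) x
    have ra3 : br (x * y * x) * br y = br (-(x * x)) * br y := by
      have := RA y (-(x * x))
      rwa [mul_neg, neg_neg, show y * (x * x) = x * y * x from by
        rw [← mul_assoc, mul_comm y x]] at this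
    have s1 : br (x * y) * (η * (br x * br y)) = η * (br (x * y) * (br x * br y)) := by
      rw [← mul_assoc, h_comm, mul_assoc]
    have s3 : br (x * y * x) * br y = br (-x) * br y + br x * br y := ra3.trans R7
    linear_combination (norm := noncomm_ring)
      br (x * y) * hmb' + ra1 + s1 + hmc * br y + s3
  -- R4 : br (x*y) * br (-1) = br y * br (-1) + br x * br (-y) - br x * br y
  have hmd : η * br y * br (-1) = br (-y) - br y - br (-1) := by
    have h' := h_mul y (-1); rwa [mul_neg_one] at h'
  have R4 : br (x * y) * br (-1) = br y * br (-1) + br x * br (-y) - br x * br y := by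
    linear_combination (norm := noncomm_ring)
      hmb' * br (-1) - (h_comm x) * (br y * br (-1)) + br x * hmd
  -- R2 : br x * br (-y) = br x * br (-1) + br (-x) * br y - br (-1) * br y
  have hme : η * br (-1) * br y = br (-y) - br (-1) - br y := by
    have h' := h_mul (-1) y; rwa [neg_one_mul] at h'
  have hmf : η * br x * br (-1) = br (-x) - br x - br (-1) := by
    have h' := h_mul x (-1); rwa [mul_neg_one] at h'
  have R2 : br x * br (-y) = br x * br (-1) + br (-x) * br y - br (-1) * br y := by
    linear_combination (norm := noncomm_ring)
      -(br x * hme) + (h_comm x) * (br (-1) * br y) + hmf * br y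
  -- R12 : br (-y) * br x = br x * br (-1) - br x * br y
  have R12 : br (-y) * br x = br x * br (-1) - br x * br y := by
    linear_combination (norm := noncomm_ring) -R10 + e5 + R4 + R2 + eqm
  -- final
  linear_combination (norm := noncomm_ring) hme * br x + R12 + epm
end
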